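/- In the universal double affine Hecke algebra Ĥ of type (C₁^∨, C₁), with x = t₀^∨ t₁ + (t₀^∨ t₁)^{-1}, y = t₁^∨ t₁ + (t₁^∨ t₁)^{-1}, z = t₀ t₁ + (t₀ t₁)^{-1}, and Q the inverse of the central element t₀^∨ t₀ t₁^∨ t₁, the following holds: Q y z - Q^{-1} z y + (Q² - Q^{-2}) x = (Q - Q^{-1})·((t₁^∨ + (t₁^∨)^{-1})(t₀ + t₀^{-1}) + (t₀^∨ + (t₀^∨)^{-1})(Q^{-1} t₁ + Q t₁^{-1})). -/
import Mathlib


/-- Defining relations of the universal DAHA of type (C₁∨,C₁).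
Generator indices: 0 = t₀∨, 1 = t₀, 2 = t₁∨, 3 = t₁; index i+4 is the inverse of index i. -/
inductive URel (F : Type) [Field F] :
    FreeAlgebra F (Fin 8) → FreeAlgebra F (Fin 8) → Prop
  | invLeft (i : Fin 4) :
      URel F (FreeAlgebra.ι F (i.castAdd 4) * FreeAlgebra.ι F (i.addNat 4)) 1
  | invRight (i : Fin 4) :
      URel F (FreeAlgebra.ι F (i.addNat 4) * FreeAlgebra.ι F (i.castAdd 4)) 1
  | central (i : Fin 4) (a : FreeAlgebra F (Fin 8)) :
      URel F ((FreeAlgebra.ι F (i.castAdd 4) + FreeAlgebra.ι F (i.addNat 4)) * a)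
             (a * (FreeAlgebra.ι F (i.castAdd 4) + FreeAlgebra.ι F (i.addNat 4)))
  | prodCentral (a : FreeAlgebra F (Fin 8)) :
      URel F ((FreeAlgebra.ι F 0 * FreeAlgebra.ι F 1 * FreeAlgebra.ι F 2 * FreeAlgebra.ι F 3) * a)
             (a * (FreeAlgebra.ι F 0 * FreeAlgebra.ι F 1 * FreeAlgebra.ι F 2 * FreeAlgebra.ι F 3))

/-- The universal double affine Hecke algebra of type (C₁∨,C₁). -/
abbrev UDAHA (F : Type) [Field F] := RingQuot (URel F)

/-- The images of the generators in the UDAHA. -/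
noncomputable def T (F : Type) [Field F] (i : Fin 8) : UDAHA F :=
  RingQuot.mkAlgHom F (URel F) (FreeAlgebra.ι F i)

section Helpers

private lemma mv2 {R : Type*} [Ring R] {s : R} (h : ∀ u : R, s * u = u * s) (x : R) :
    x * s = s * x := (h x).symm

private lemma mv {R : Type*} [Ring R] {s : R} (h : ∀ u : R, s * u = u * s) (x w : R) :
    x * (s * w) = s * (x * w) := by rw [← mul_assoc, mv2 h, mul_assoc]

set_option maxHeartbeats 4000000 in
private lemma key {R : Type*} [Ring R] (a b c d A B C D : R)
    (haA : a * A = 1) (hAa : A * a = 1)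
    (hbB : b * B = 1) (hBb : B * b = 1)
    (hcC : c * C = 1) (hCc : C * c = 1)
    (hdD : d * D = 1) (hDd : D * d = 1)
    (cenA : ∀ u : R, (a + A) * u = u * (a + A))
    (cenB : ∀ u : R, (b + B) * u = u * (b + B))
    (cenC : ∀ u : R, (c + C) * u = u * (c + C))
    (cenD : ∀ u : R, (d + D) * u = u * (d + D))
    (hp : ∀ u : R, (a * b * c * d) * u = u * (a * b * c * d)) :
    D * C * B * A * ((c * d + D * C) * (b * d + D * B))
      - a * b * c * d * ((b * d + D * B) * (c * d + D * C))
      + (D * C * B * A * (D * C * B * A) - a * b * c * d * (a * b * c * d)) * (a * d + D * A)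
    = (D * C * B * A - a * b * c * d) *
        ((c + C) * (b + B) + (a + A) * (a * b * c * d * d + D * C * B * A * D)) := by
  have haA' : ∀ w : R, a * (A * w) = w := fun w => by rw [← mul_assoc, haA, one_mul]
  have hAa' : ∀ w : R, A * (a * w) = w := fun w => by rw [← mul_assoc, hAa, one_mul]
  have hbB' : ∀ w : R, b * (B * w) = w := fun w => by rw [← mul_assoc, hbB, one_mul]
  have hBb' : ∀ w : R, B * (b * w) = w := fun w => by rw [← mul_assoc, hBb, one_mul]
  have hcC' : ∀ w : R, c * (C * w) = w := fun w => by rw [← mul_assoc, hcC, one_mul]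
  have hCc' : ∀ w : R, C * (c * w) = w := fun w => by rw [← mul_assoc, hCc, one_mul]
  have hdD' : ∀ w : R, d * (D * w) = w := fun w => by rw [← mul_assoc, hdD, one_mul]
  have hDd' : ∀ w : R, D * (d * w) = w := fun w => by rw [← mul_assoc, hDd, one_mul]
  set pe := a * b * c * d with hpe
  set qe := D * C * B * A with hqe
  have hpe' : pe = a * (b * (c * d)) := by rw [hpe, mul_assoc, mul_assoc]
  have hqp : qe * pe = 1 := by
    rw [hqe, hpe]
    simp only [mul_assoc]
    rw [hAa', hBb', hCc', hDd]
  have hpq : pe * qe = 1 := by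
    rw [hqe, hpe]
    simp only [mul_assoc]
    rw [hdD', hcC', hbB', haA]
  have hqc : ∀ u : R, qe * u = u * qe := by
    intro u
    calc qe * u = qe * (u * 1) := by rw [mul_one]
      _ = qe * (u * (pe * qe)) := by rw [hpq]
      _ = qe * (u * pe * qe) := by rw [mul_assoc u pe qe]
      _ = qe * (pe * u * qe) := by rw [← hp u]
      _ = qe * (pe * (u * qe)) := by rw [mul_assoc pe u qe]
      _ = qe * pe * (u * qe) := by rw [← mul_assoc]
      _ = 1 * (u * qe) := by rw [hqp]
      _ = u * qe := one_mul _
  have hqp' : ∀ w : R, qe * (pe * w) = w := fun w => by rw [← mul_assoc, hqp, one_mul]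
  have hpq' : ∀ w : R, pe * (qe * w) = w := fun w => by rw [← mul_assoc, hpq, one_mul]
  set al := a + A with hal
  set be := b + B with hbe
  set ga := c + C with hga
  set de := d + D with hde
  have hAe : A = al - a := by rw [hal]; exact (add_sub_cancel_left a A).symm
  have hBe : B = be - b := by rw [hbe]; exact (add_sub_cancel_left b B).symm
  have hCe : C = ga - c := by rw [hga]; exact (add_sub_cancel_left c C).symm
  have hDe : D = de - d := by rw [hde]; exact (add_sub_cancel_left d D).symm
  -- square rules
  have haa : a * a = al * a - 1 := by
    rw [hal, add_mul, hAa, add_sub_cancel_right]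
  have hbb : b * b = be * b - 1 := by
    rw [hbe, add_mul, hBb, add_sub_cancel_right]
  have hcc : c * c = ga * c - 1 := by
    rw [hga, add_mul, hCc, add_sub_cancel_right]
  have hdd : d * d = de * d - 1 := by
    rw [hde, add_mul, hDd, add_sub_cancel_right]
  -- rule ba
  have hcd0 : B * (A * pe) = c * d := by
    rw [hpe', hAa', hBb']
  have h2 : qe * (c * d) = B * A := by
    rw [← hcd0, hqc]
    simp only [mul_assoc]
    rw [hpq, mul_one]
  rw [hBe, hAe] at h2
  have hba : b * a = qe * (c * d) + b * al + be * a - be * al := by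
    rw [h2]; noncomm_ring
  -- rule dc
  have h3a : pe * (D * C) = a * b := by
    rw [hpe']
    simp only [mul_assoc]
    rw [hdD', hcC, mul_one]
  have h3 : qe * (a * b) = D * C := by
    rw [← h3a, ← mul_assoc, hqp, one_mul]
  rw [hDe, hCe] at h3
  have hdc : d * c = qe * (a * b) + d * ga + de * c - de * ga := by
    rw [h3]; noncomm_ring
  -- rule bc
  have hbc0 : A * (pe * D) = b * c := by
    rw [hpe']
    simp only [mul_assoc]
    rw [hdD, mul_one, hAa']
  rw [hAe, hDe] at hbc0
  have hbc : b * c = (al - a) * (pe * (de - d)) := hbc0.symm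
  -- rule da
  have hdabc : d * (a * (b * c)) = pe := by
    calc d * (a * (b * c)) = d * (a * (b * (c * (d * D)))) := by rw [hdD, mul_one]
      _ = d * pe * D := by rw [hpe']; simp only [mul_assoc]
      _ = pe * d * D := by rw [hp]
      _ = pe * (d * D) := by rw [mul_assoc]
      _ = pe := by rw [hdD, mul_one]
  have hda0 : pe * (C * B) = d * a := by
    rw [← hdabc]
    simp only [mul_assoc]
    rw [hcC', hbB, mul_one]
  rw [hCe, hBe] at hda0
  have hda : d * a = pe * ((ga - c) * (be - b)) := hda0.symm
  -- eliminate capital letters from the goal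
  rw [hAe, hBe, hCe, hDe]
  -- extended word rules
  have haa' : ∀ w : R, a * (a * w) = (al * a - 1) * w := fun w => by rw [← mul_assoc, haa]
  have hbb' : ∀ w : R, b * (b * w) = (be * b - 1) * w := fun w => by rw [← mul_assoc, hbb]
  have hcc' : ∀ w : R, c * (c * w) = (ga * c - 1) * w := fun w => by rw [← mul_assoc, hcc]
  have hdd' : ∀ w : R, d * (d * w) = (de * d - 1) * w := fun w => by rw [← mul_assoc, hdd]
  have hba' : ∀ w : R, b * (a * w) = (qe * (c * d) + b * al + be * a - be * al) * w :=
    fun w => by rw [← mul_assoc, hba]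
  have hdc' : ∀ w : R, d * (c * w) = (qe * (a * b) + d * ga + de * c - de * ga) * w :=
    fun w => by rw [← mul_assoc, hdc]
  have hbc' : ∀ w : R, b * (c * w) = ((al - a) * (pe * (de - d))) * w :=
    fun w => by rw [← mul_assoc, hbc]
  have hda' : ∀ w : R, d * (a * w) = (pe * ((ga - c) * (be - b))) * w :=
    fun w => by rw [← mul_assoc, hda]
  simp only [mul_add, add_mul, mul_sub, sub_mul, mul_assoc, mul_one, one_mul,
    haa', haa, hbb', hbb, hcc', hcc, hdd', hdd, hba', hba, hbc', hbc, hdc', hdc, hda', hda,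
    hqp, hpq, hqp', hpq',
    mv2 cenA a, mv cenA a, mv2 cenA b, mv cenA b, mv2 cenA c, mv cenA c, mv2 cenA d, mv cenA d,
    mv2 cenB a, mv cenB a, mv2 cenB b, mv cenB b, mv2 cenB c, mv cenB c, mv2 cenB d, mv cenB d,
    mv2 cenC a, mv cenC a, mv2 cenC b, mv cenC b, mv2 cenC c, mv cenC c, mv2 cenC d, mv cenC d,
    mv2 cenD a, mv cenD a, mv2 cenD b, mv cenD b, mv2 cenD c, mv cenD c, mv2 cenD d, mv cenD d,
    mv2 hp a, mv hp a, mv2 hp b, mv hp b, mv2 hp c, mv hp c, mv2 hp d, mv hp d,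
    mv2 hqc a, mv hqc a, mv2 hqc b, mv hqc b, mv2 hqc c, mv hqc c, mv2 hqc d, mv hqc d,
    mv2 cenA be, mv cenA be, mv2 cenA ga, mv cenA ga, mv2 cenA de, mv cenA de,
    mv2 cenA pe, mv cenA pe, mv2 cenA qe, mv cenA qe,
    mv2 cenB ga, mv cenB ga, mv2 cenB de, mv cenB de,
    mv2 cenB pe, mv cenB pe, mv2 cenB qe, mv cenB qe,
    mv2 cenC de, mv cenC de, mv2 cenC pe, mv cenC pe, mv2 cenC qe, mv cenC qe,
    mv2 cenD pe, mv cenD pe, mv2 cenD qe, mv cenD qe,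
    mv2 hp qe, mv hp qe]
  noncomm_ring

end Helpers

section UDAHAFacts

variable {F : Type} [Field F]

private lemma rel_eq {x y : FreeAlgebra F (Fin 8)} (h : URel F x y) :
    RingQuot.mkAlgHom F (URel F) x = RingQuot.mkAlgHom F (URel F) y :=
  RingQuot.mkAlgHom_rel F h

private lemma inv_left (i : Fin 4) : T F (i.castAdd 4) * T F (i.addNat 4) = 1 := by
  simpa only [T, map_mul, map_one] using rel_eq (URel.invLeft (F := F) i)

private lemma inv_right (i : Fin 4) : T F (i.addNat 4) * T F (i.castAdd 4) = 1 := by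
  simpa only [T, map_mul, map_one] using rel_eq (URel.invRight (F := F) i)

private lemma central (i : Fin 4) (u : UDAHA F) :
    (T F (i.castAdd 4) + T F (i.addNat 4)) * u
      = u * (T F (i.castAdd 4) + T F (i.addNat 4)) := by
  obtain ⟨w, rfl⟩ := RingQuot.mkAlgHom_surjective F (URel F) u
  simpa only [T, map_mul, map_add] using rel_eq (URel.central (F := F) i w)

private lemma pcentral (u : UDAHA F) :
    (T F 0 * T F 1 * T F 2 * T F 3) * u = u * (T F 0 * T F 1 * T F 2 * T F 3) := by
  obtain ⟨w, rfl⟩ := RingQuot.mkAlgHom_surjective F (URel F) u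
  simpa only [T, map_mul] using rel_eq (URel.prodCentral (F := F) w)

end UDAHAFacts

theorem stmt_15 (F : Type) [Field F] :
    let t0v := T F 0; let t0 := T F 1; let t1v := T F 2; let t1 := T F 3
    let t0vi := T F 4; let t0i := T F 5; let t1vi := T F 6; let t1i := T F 7
    let Q := t1i * t1vi * t0i * t0vi
    let Qi := t0v * t0 * t1v * t1
    let x := t0v * t1 + t1i * t0vi
    let y := t1v * t1 + t1i * t1vi
    let z := t0 * t1 + t1i * t0i
    Q * (y * z) - Qi * (z * y) + (Q * Q - Qi * Qi) * x =
      (Q - Qi) * ((t1v + t1vi) * (t0 + t0i) + (t0v + t0vi) * (Qi * t1 + Q * t1i)) := by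
  exact key (T F 0) (T F 1) (T F 2) (T F 3) (T F 4) (T F 5) (T F 6) (T F 7)
    (inv_left 0) (inv_right 0) (inv_left 1) (inv_right 1)
    (inv_left 2) (inv_right 2) (inv_left 3) (inv_right 3)
    (central 0) (central 1) (central 2) (central 3) pcentral
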